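/- arXiv:1405.1278 — 3 statements merged into one kernel-verified Lean document; each statement's English description precedes it below -/
import Mathlib

section
/- Let R = R_0 ⊕ R_1 ⊕ R_2 ⊕ ⋯ be a positively ℤ-graded algebra over a commutative ring C that is generated as a C-algebra by finitely many homogeneous elements. Then for every positive integer N there is a positive integer D with N < D such that every homogeneous element r of degree j > D can be written as r = Σ_i c_i u_{i,1} u_{i,2} ⋯ u_{i,m_i}, where each c_i ∈ C and each u_{i,k} is homogeneous of some degree ℓ with N ≤ ℓ < D. -/
/-!
Let `L` bound the degrees of the generators. A monomial in the generators of degree `j > 2N + L`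
is regrouped, reading its factors from left to right, into consecutive blocks: close a block as
soon as its degree reaches `N`, so that it stays below `N + L`, and absorb a final remainder of
degree `< N` into the last block. Every block is then homogeneous of degree in `[N, 2N + L)`. A
homogeneous element of degree `j` is a `C`-linear combination of monomials, and projecting to
degree `j` shows that the monomials of degree `j` suffice.
-/

namespace List

theorem exists_prefix_sum_mem_Ico {α : Type*} (d : α → ℕ) {k L : ℕ} (hk : 0 < k) :
    ∀ l : List α, (∀ u ∈ l, d u ≤ L) → k ≤ (l.map d).sum →
      ∃ p t, l = p ++ t ∧ k ≤ (p.map d).sum ∧ (p.map d).sum < k + L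
  | [], _, hsum => by simp at hsum; omega
  | a :: l, hL, hsum => by
    have hdaL := hL a mem_cons_self
    by_cases hak : k ≤ d a
    · exact ⟨[a], l, rfl, by simpa using hak, by simp; omega⟩
    · obtain ⟨p, t, rfl, hp₁, hp₂⟩ := exists_prefix_sum_mem_Ico d (k := k - d a) (by omega) l
        (fun u hu => hL u (mem_cons_of_mem _ hu)) (by simp at hsum; omega)
      exact ⟨a :: p, t, rfl, by simp; omega, by simp; omega⟩

end List

section GradedMonoid

variable {R S : Type*} [Monoid R] [SetLike S R] {𝒜 : ℕ → S} [SetLike.GradedMonoid 𝒜]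

theorem SetLike.list_prod_mem_graded_sum (d : R → ℕ) {l : List R} (hl : ∀ u ∈ l, u ∈ 𝒜 (d u)) :
    l.prod ∈ 𝒜 (l.map d).sum := by
  simpa using SetLike.list_prod_map_mem_graded l d id hl

theorem SetLike.exists_list_prod_eq_of_degree_bounded (d : R → ℕ) {N L : ℕ} (hN : 0 < N)
    (l : List R) (hl : ∀ u ∈ l, u ∈ 𝒜 (d u) ∧ d u ≤ L) (hsum : N ≤ (l.map d).sum) :
    ∃ bs : List R, bs ≠ [] ∧ (∀ b ∈ bs, ∃ ℓ, N ≤ ℓ ∧ ℓ < 2 * N + L ∧ b ∈ 𝒜 ℓ) ∧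
      l.prod = bs.prod := by
  induction hlen : l.length using Nat.strong_induction_on generalizing l with
  | _ n ih =>
  obtain ⟨p, t, rfl, hp₁, hp₂⟩ :=
    List.exists_prefix_sum_mem_Ico d hN l (fun u hu => (hl u hu).2) hsum
  have hp_mem : p.prod ∈ 𝒜 (p.map d).sum :=
    list_prod_mem_graded_sum d fun u hu => (hl u (List.mem_append_left _ hu)).1
  by_cases ht : N ≤ (t.map d).sum
  · have hp_ne : p ≠ [] := by rintro rfl; simp at hp₁; omega
    obtain ⟨bs, -, hbs, hprod⟩ := ih t.length
      (by rw [← hlen, List.length_append]; have := List.length_pos_iff.2 hp_ne; omega) t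
      (fun u hu => hl u (List.mem_append_right _ hu)) ht rfl
    exact ⟨p.prod :: bs, List.cons_ne_nil _ _,
      List.forall_mem_cons.2 ⟨⟨_, hp₁, by omega, hp_mem⟩, hbs⟩, by simp [hprod]⟩
  · refine ⟨[(p ++ t).prod], List.cons_ne_nil _ _, ?_, (List.prod_singleton).symm⟩
    simp only [List.mem_singleton, forall_eq]
    refine ⟨_, hsum, ?_, list_prod_mem_graded_sum d fun u hu => (hl u hu).1⟩
    simp only [List.map_append, List.sum_append]
    omega

end GradedMonoid

theorem DirectSum.Decomposition.mem_span_inter_of_mem_span {ι C M : Type*} [DecidableEq ι]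
    [Semiring C] [AddCommMonoid M] [Module C M] (ℳ : ι → Submodule C M)
    [DirectSum.Decomposition ℳ] {s : Set M} (hs : ∀ x ∈ s, SetLike.IsHomogeneousElem ℳ x)
    {i : ι} {x : M} (hxi : x ∈ ℳ i) (hx : x ∈ Submodule.span C s) :
    x ∈ Submodule.span C (s ∩ ℳ i) := by
  let π : M →ₗ[C] M := (ℳ i).subtype ∘ₗ DirectSum.component C ι (fun j => ℳ j) i ∘ₗ
    (DirectSum.decomposeLinearEquiv ℳ).toLinearMap
  have hπ : ∀ y, π y = DirectSum.decompose ℳ y i := fun _ => rfl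
  have hπs : π '' s ⊆ Submodule.span C (s ∩ ℳ i) := by
    rintro _ ⟨y, hy, rfl⟩
    obtain ⟨k, hyk⟩ := hs y hy
    rw [hπ]
    by_cases hki : k = i
    · subst hki
      rw [DirectSum.decompose_of_mem_same ℳ hyk]
      exact Submodule.subset_span ⟨hy, hyk⟩
    · rw [DirectSum.decompose_of_mem_ne ℳ hyk hki]
      exact Submodule.zero_mem _
  have := Submodule.mem_map_of_mem (f := π) hx
  rw [Submodule.map_span, hπ, DirectSum.decompose_of_mem_same ℳ hxi] at this
  exact Submodule.span_le.2 hπs this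

universe u

theorem large_degree_generation
    {C : Type u} {R : Type u} [CommRing C] [Ring R] [Algebra C R]
    (𝒜 : ℕ → Submodule C R) [GradedAlgebra 𝒜]
    (s : Finset R) (hhom : ∀ x ∈ s, SetLike.IsHomogeneousElem 𝒜 x)
    (hgen : Algebra.adjoin C (s : Set R) = ⊤)
    (N : ℕ) (hN : 0 < N) :
    ∃ D : ℕ, N < D ∧ ∀ j : ℕ, D < j → ∀ r ∈ 𝒜 j,
      r ∈ Submodule.span C {x : R | ∃ l : List R, l ≠ [] ∧
        (∀ u ∈ l, ∃ ℓ : ℕ, N ≤ ℓ ∧ ℓ < D ∧ u ∈ 𝒜 ℓ) ∧ x = l.prod} := by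
  classical
  obtain ⟨d, hd⟩ : ∃ d : R → ℕ, ∀ x ∈ s, x ∈ 𝒜 (d x) :=
    ⟨fun x => if h : x ∈ s then (hhom x h).choose else 0,
      fun x hx => by simpa [dif_pos hx] using (hhom x hx).choose_spec⟩
  refine ⟨2 * N + s.sup d, by omega, fun j hj r hr => ?_⟩
  have hmonomials : Submonoid.closure (s : Set R) ≤ SetLike.homogeneousSubmonoid 𝒜 :=
    Submonoid.closure_le.2 hhom
  have hr_span : r ∈ Submodule.span C (Submonoid.closure (s : Set R) : Set R) := by
    rw [← Algebra.adjoin_eq_span, hgen]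
    trivial
  refine Submodule.span_le.2 ?_ (DirectSum.Decomposition.mem_span_inter_of_mem_span 𝒜
    (fun x hx => hmonomials hx) hr hr_span)
  rintro m ⟨hm, hmj⟩
  obtain ⟨l, hls, rfl⟩ := Submonoid.exists_list_of_mem_closure hm
  by_cases hm0 : l.prod = 0
  · rw [hm0]
    exact Submodule.zero_mem _
  have hl : ∀ u ∈ l, u ∈ 𝒜 (d u) ∧ d u ≤ s.sup d := fun u hu =>
    ⟨hd u (hls u hu), Finset.le_sup (hls u hu)⟩
  have hdeg : (l.map d).sum = j := DirectSum.degree_eq_of_mem_mem 𝒜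
    (SetLike.list_prod_mem_graded_sum d fun u hu => (hl u hu).1) hmj hm0
  obtain ⟨bs, hbs_ne, hbs, hprod⟩ :=
    SetLike.exists_list_prod_eq_of_degree_bounded d hN l hl (by omega)
  exact Submodule.subset_span ⟨bs, hbs_ne, hbs, hprod⟩
end

section
/- Let R = R_0 ⊕ R_1 ⊕ ⋯ be a positively ℤ-graded ring such that R_0 is an Artin algebra over a commutative Artin ring C and each R_i has finite length over R_0. Fix a positive integer N and let T = ⊕_{i ≥ N} R_i, a ring without identity. Then R is finitely generated as a C-algebra if and only if T is finitely generated as a (non-unital) C-algebra. -/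
/-!
STATEMENT 1: Let `R = R₀ ⊕ R₁ ⊕ ⋯` be a positively `ℤ`-graded ring such that `R₀` is an
Artin algebra over a commutative Artin ring `C` and each `Rᵢ` has finite length over `R₀`.
Fix `N > 0` and let `T = ⊕_{i ≥ N} Rᵢ`.  Then `R` is finitely generated as a `C`-algebra
iff `T` is finitely generated as a non-unital `C`-algebra.
(Finite length over the Artin algebra `R₀` is encoded as being a finite `C`-module.)
-/

universe u

set_option linter.unusedSectionVars false



open Submodule DirectSum

section aux

variable {C : Type u} {R : Type u} [CommRing C] [Ring R] [Algebra C R]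

def prodSet (t : Finset R) : Set R :=
  {y : R | ∃ l : List R, l ≠ [] ∧ (∀ u ∈ l, u ∈ t) ∧ y = l.prod}

lemma span_le_spanProd (t : Finset R) :
    span C (t : Set R) ≤ span C (prodSet t) :=
  span_le.mpr fun u hu => subset_span ⟨[u], by simp, by simpa using hu, by simp⟩

lemma mul_mem_spanProd {t : Finset R} {x y : R} (hx : x ∈ span C (t : Set R))
    (hy : y ∈ span C (prodSet t)) : x * y ∈ span C (prodSet t) := by
  have h := Submodule.mul_mem_mul hx hy
  rw [Submodule.span_mul_span] at h
  refine span_le.mpr ?_ h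
  intro z hz
  rw [Set.mem_mul] at hz
  obtain ⟨u, hu, v, ⟨l, hl, hls, rfl⟩, rfl⟩ := hz
  exact subset_span ⟨u :: l, by simp, by
    intro w hw
    rcases List.mem_cons.mp hw with h1 | h2
    · exact h1 ▸ hu
    · exact hls w h2, (List.prod_cons).symm⟩

lemma split_list {D : ℕ} : ∀ (l : List (ℕ × R)) (K : ℕ), (∀ p ∈ l, p.1 ≤ D) →
    K ≤ (l.map Prod.fst).sum →
    ∃ l₁ l₂ : List (ℕ × R), l = l₁ ++ l₂ ∧ K ≤ (l₁.map Prod.fst).sum ∧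
      (l₁.map Prod.fst).sum ≤ K + D := by
  intro l
  induction l with
  | nil => intro K _ hK; exact ⟨[], [], rfl, by simpa using hK, by simp⟩
  | cons p rest ih =>
    intro K hD hK
    by_cases h : K ≤ p.1
    · exact ⟨[p], rest, rfl, by simpa using h, by
        simp only [List.map_cons, List.map_nil, List.sum_cons, List.sum_nil, add_zero]
        have := hD p (by simp)
        omega⟩
    · push_neg at h
      simp only [List.map_cons, List.sum_cons] at hK
      obtain ⟨m₁, m₂, heq, h1, h2⟩ := ih (K - p.1)
        (fun q hq => hD q (List.mem_cons_of_mem _ hq)) (by omega)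
      exact ⟨p :: m₁, m₂, by rw [heq]; rfl, by
        simp only [List.map_cons, List.sum_cons]; omega, by
        simp only [List.map_cons, List.sum_cons]; omega⟩

variable (𝒜 : ℕ → Submodule C R) [GradedAlgebra 𝒜]

lemma graded_list_prod (l : List (ℕ × R)) (h : ∀ p ∈ l, p.2 ∈ 𝒜 p.1) :
    (l.map Prod.snd).prod ∈ 𝒜 ((l.map Prod.fst).sum) :=
  SetLike.list_prod_map_mem_graded l Prod.fst Prod.snd h

lemma claimB {t : Finset R} {N D : ℕ} (hN : 0 < N)
    (ht : ∀ i, N ≤ i → i ≤ 2 * N + D → 𝒜 i ≤ span C (t : Set R)) :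
    ∀ n (l : List (ℕ × R)), l.length ≤ n → (∀ p ∈ l, p.2 ∈ 𝒜 p.1 ∧ p.1 ≤ D) →
      N ≤ (l.map Prod.fst).sum →
      (l.map Prod.snd).prod ∈ span C (prodSet t) := by
  intro n
  induction n with
  | zero =>
    intro l hlen hmem hsum
    rw [List.length_eq_zero_iff.mp (Nat.le_zero.mp hlen)] at hsum
    simp at hsum; omega
  | succ n ih =>
    intro l hlen hmem hsum
    have hprod : (l.map Prod.snd).prod ∈ 𝒜 ((l.map Prod.fst).sum) :=
      graded_list_prod 𝒜 l fun p hp => (hmem p hp).1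
    by_cases hd : (l.map Prod.fst).sum ≤ 2 * N + D
    · exact span_le_spanProd t (ht _ hsum hd hprod)
    · push_neg at hd
      obtain ⟨l₁, l₂, heq, h1, h2⟩ := split_list l N (fun p hp => (hmem p hp).2) hsum
      subst heq
      have hl₁ : l₁ ≠ [] := by
        intro h; subst h; simp at h1; omega
      have hsum2 : N ≤ (l₂.map Prod.fst).sum := by
        simp only [List.map_append, List.sum_append] at hd hsum
        omega
      have hlen2 : l₂.length ≤ n := by
        have := List.length_pos_iff.mpr hl₁
        simp only [List.length_append] at hlen
        omega
      have hp2 : (l₂.map Prod.snd).prod ∈ span C (prodSet t) :=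
        ih l₂ hlen2 (fun p hp => hmem p (List.mem_append_right _ hp)) hsum2
      have hp1 : (l₁.map Prod.snd).prod ∈ span C (t : Set R) := by
        refine ht _ h1 (by omega) ?_
        exact graded_list_prod 𝒜 l₁ fun p hp => (hmem p (List.mem_append_left _ hp)).1
      rw [List.map_append, List.prod_append]
      exact mul_mem_spanProd hp1 hp2

noncomputable def projC (d : ℕ) : R →ₗ[C] R :=
  ((𝒜 d).subtype.comp (DFinsupp.lapply d)).comp
    (DirectSum.decomposeLinearEquiv 𝒜).toLinearMap

lemma projC_apply (d : ℕ) (x : R) : projC 𝒜 d x = (DirectSum.decompose 𝒜 x d : R) := rfl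

lemma claimC {s' t : Finset R} {N D : ℕ} (hN : 0 < N) (deg : R → ℕ)
    (hs' : ∀ u ∈ s', u ∈ 𝒜 (deg u) ∧ deg u ≤ D)
    (hadj : Algebra.adjoin C (s' : Set R) = ⊤)
    (ht : ∀ i, N ≤ i → i ≤ 2 * N + D → 𝒜 i ≤ span C (t : Set R))
    {d : ℕ} (hd : N ≤ d) : 𝒜 d ≤ span C (prodSet t) := by
  intro x hx
  have hxspan : x ∈ span C (Submonoid.closure (s' : Set R) : Set R) := by
    rw [← Algebra.adjoin_eq_span, hadj]; trivial
  have hximg : projC 𝒜 d x ∈ Submodule.map (projC 𝒜 d)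
      (span C (Submonoid.closure (s' : Set R) : Set R)) :=
    Submodule.mem_map_of_mem hxspan
  rw [Submodule.map_span] at hximg
  have hxeq : projC 𝒜 d x = x := by
    rw [projC_apply, DirectSum.decompose_of_mem_same 𝒜 hx]
  rw [hxeq] at hximg
  refine span_le.mpr ?_ hximg
  rintro _ ⟨m, hm, rfl⟩
  obtain ⟨l, hls, rfl⟩ := Submonoid.exists_list_of_mem_closure hm
  set l' : List (ℕ × R) := l.map fun u => (deg u, u) with hl'
  have hmap2 : l'.map Prod.snd = l := by
    rw [hl', List.map_map]; exact List.map_id l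
  have hmem' : ∀ p ∈ l', p.2 ∈ 𝒜 p.1 ∧ p.1 ≤ D := by
    intro p hp
    rw [hl', List.mem_map] at hp
    obtain ⟨u, hu, rfl⟩ := hp
    exact hs' u (hls u hu)
  have hprod : l.prod ∈ 𝒜 ((l'.map Prod.fst).sum) := by
    have := graded_list_prod 𝒜 l' (fun p hp => (hmem' p hp).1)
    rwa [hmap2] at this
  by_cases he : (l'.map Prod.fst).sum = d
  · subst he
    rw [projC_apply, DirectSum.decompose_of_mem_same 𝒜 hprod, ← hmap2]
    exact claimB 𝒜 hN ht l'.length l' le_rfl hmem' hd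
  · rw [projC_apply, DirectSum.decompose_of_mem_ne 𝒜 hprod he]
    exact Submodule.zero_mem _

end aux

theorem tail_finite_generation
    {C : Type u} {R : Type u} [CommRing C] [IsArtinianRing C] [Ring R] [Algebra C R]
    (𝒜 : ℕ → Submodule C R) [GradedAlgebra 𝒜]
    [Module.Finite C (𝒜 0)] (hfl : ∀ i : ℕ, Module.Finite C (𝒜 i))
    (N : ℕ) (hN : 0 < N) :
    (∃ s : Finset R, Algebra.adjoin C (s : Set R) = ⊤) ↔
      (∃ s : Finset R, (↑s : Set R) ⊆ (⨆ i ≥ N, 𝒜 i : Submodule C R) ∧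
        ∀ x ∈ (⨆ i ≥ N, 𝒜 i : Submodule C R),
          x ∈ Submodule.span C
            {y : R | ∃ l : List R, l ≠ [] ∧ (∀ u ∈ l, u ∈ s) ∧ y = l.prod}) := by
  classical
  constructor
  · rintro ⟨s, hs⟩
    set s' : Finset R := s.biUnion (fun a =>
      (DirectSum.decompose 𝒜 a).support.image fun i => ((DirectSum.decompose 𝒜 a) i : R))
      with hs'def
    have hs'hom : ∀ u ∈ s', ∃ i, u ∈ 𝒜 i := by
      intro u hu
      rw [hs'def, Finset.mem_biUnion] at hu
      obtain ⟨a, _, hu⟩ := hu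
      rw [Finset.mem_image] at hu
      obtain ⟨i, _, rfl⟩ := hu
      exact ⟨i, ((DirectSum.decompose 𝒜 a) i).2⟩
    have hadj : Algebra.adjoin C (s' : Set R) = ⊤ := by
      rw [eq_top_iff, ← hs]
      refine Algebra.adjoin_le ?_
      intro a ha
      rw [← DirectSum.sum_support_decompose 𝒜 a]
      refine Subalgebra.sum_mem _ fun i hi => Algebra.subset_adjoin ?_
      exact Finset.mem_coe.mpr (Finset.mem_biUnion.mpr
        ⟨a, ha, Finset.mem_image.mpr ⟨i, hi, rfl⟩⟩)
    set deg : R → ℕ := fun u => if h : ∃ i, u ∈ 𝒜 i then h.choose else 0 with hdegdef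
    have hdeg : ∀ u ∈ s', u ∈ 𝒜 (deg u) := by
      intro u hu
      have h := hs'hom u hu
      rw [hdegdef]
      simp only [dif_pos h]
      exact h.choose_spec
    set D := s'.sup deg with hD
    have hdegD : ∀ u ∈ s', u ∈ 𝒜 (deg u) ∧ deg u ≤ D :=
      fun u hu => ⟨hdeg u hu, Finset.le_sup hu⟩
    have hQfg : ((Finset.Icc N (2 * N + D)).sup 𝒜).FG :=
      Submodule.fg_finset_sup _ _ fun i _ => Module.Finite.iff_fg.mp (hfl i)
    obtain ⟨t, ht⟩ := hQfg
    have htQ : ∀ i, N ≤ i → i ≤ 2 * N + D → 𝒜 i ≤ span C (t : Set R) := by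
      intro i h1 h2
      rw [ht]
      exact Finset.le_sup (Finset.mem_Icc.mpr ⟨h1, h2⟩)
    refine ⟨t, ?_, ?_⟩
    · intro u hu
      have h1 : u ∈ (Finset.Icc N (2 * N + D)).sup 𝒜 := ht ▸ subset_span hu
      have h2 : (Finset.Icc N (2 * N + D)).sup 𝒜 ≤ (⨆ i ≥ N, 𝒜 i : Submodule C R) :=
        Finset.sup_le fun i hi =>
          le_iSup₂ (f := fun i (_ : i ≥ N) => 𝒜 i) i (Finset.mem_Icc.mp hi).1
      exact h2 h1
    · intro x hx
      have hle : (⨆ i ≥ N, 𝒜 i : Submodule C R) ≤ span C (prodSet t) :=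
        iSup₂_le fun i hi => claimC 𝒜 hN deg hdegD hadj htQ hi
      exact hle hx
  · rintro ⟨s, hsub, hspan⟩
    obtain ⟨t₀, ht₀⟩ := Submodule.fg_finset_sup (Finset.range N) 𝒜
      fun i _ => Module.Finite.iff_fg.mp (hfl i)
    refine ⟨s ∪ t₀, ?_⟩
    rw [eq_top_iff]
    intro x _
    rw [← DirectSum.sum_support_decompose 𝒜 x]
    refine Subalgebra.sum_mem _ fun i _ => ?_
    by_cases hi : N ≤ i
    · have h1 : ((DirectSum.decompose 𝒜 x i : R)) ∈ (⨆ i ≥ N, 𝒜 i : Submodule C R) :=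
        (le_iSup₂ (f := fun i (_ : i ≥ N) => 𝒜 i) i hi) (SetLike.coe_mem _)
      have h2 := hspan _ h1
      have h3 : span C {y : R | ∃ l : List R, l ≠ [] ∧ (∀ u ∈ l, u ∈ s) ∧ y = l.prod}
          ≤ Subalgebra.toSubmodule (Algebra.adjoin C ((s ∪ t₀ : Finset R) : Set R)) := by
        rw [span_le]
        rintro y ⟨l, _, hls, rfl⟩
        rw [SetLike.mem_coe, Subalgebra.mem_toSubmodule]
        exact list_prod_mem fun u hu => Algebra.subset_adjoin
          (Finset.mem_coe.mpr (Finset.mem_union_left _ (hls u hu)))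
      exact (Subalgebra.mem_toSubmodule _).mp (h3 h2)
    · push_neg at hi
      have h1 : (DirectSum.decompose 𝒜 x i : R) ∈ span C (t₀ : Set R) := by
        rw [ht₀]
        exact Finset.le_sup (f := 𝒜) (Finset.mem_range.mpr hi) (SetLike.coe_mem _)
      have h3 : span C (t₀ : Set R)
          ≤ Subalgebra.toSubmodule (Algebra.adjoin C ((s ∪ t₀ : Finset R) : Set R)) := by
        rw [span_le]
        intro u hu
        rw [SetLike.mem_coe, Subalgebra.mem_toSubmodule]
        exact Algebra.subset_adjoin (Finset.mem_coe.mpr (Finset.mem_union_right _ hu))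
      exact (Subalgebra.mem_toSubmodule _).mp (h3 h1)
end

section
/- Let Λ be a ring, e an idempotent of Λ, f = 1 − e, and Λ* = fΛf. Then the functor H(Y) = Hom_{Λ*}(fΛ, Y) from left Λ*-modules to left Λ-modules is exact if and only if fΛe is projective as a left Λ*-module. -/
/-! STATEMENT 6: The functor `H = Hom_{Λ*}(fΛ, -)` is exact iff `fΛe` is a projective
left `Λ*`-module.  Exactness of `H` is expressed concretely: for every exact pair of
`Λ*`-linear maps, the induced sequence on `Hom_{Λ*}(fΛ, -)` is exact. -/

universe u

section CornerLib

variable {Λ : Type u} [Ring Λ]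

/-- The set `{x | f * x * f = x}`, i.e. the corner `fΛf`, as an additive subgroup. -/
def cornerAddSubgroup (f : Λ) : AddSubgroup Λ where
  carrier := {x | f * x * f = x}
  add_mem' := by
    intro a b ha hb
    simp only [Set.mem_setOf_eq] at *
    rw [mul_add, add_mul, ha, hb]
  zero_mem' := by simp
  neg_mem' := by
    intro a ha
    simp only [Set.mem_setOf_eq] at *
    rw [mul_neg, neg_mul, ha]

/-- The corner ring `fΛf`. -/
def Corner (f : Λ) : Type u := ↥(cornerAddSubgroup f)

instance (e : Λ) [he : Fact (IsIdempotentElem e)] : Fact (IsIdempotentElem (1 - e)) :=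
  ⟨he.out.one_sub⟩

namespace Corner

variable {f : Λ} [hf : Fact (IsIdempotentElem f)]

instance : AddCommGroup (Corner f) :=
  inferInstanceAs (AddCommGroup ↥(cornerAddSubgroup f))

theorem absorb_left {x : Λ} (hx : f * x * f = x) : f * x = x := by
  conv_lhs => rw [← hx]
  rw [← mul_assoc, ← mul_assoc, hf.out]
  exact hx

theorem absorb_right {x : Λ} (hx : f * x * f = x) : x * f = x := by
  conv_lhs => rw [← hx]
  rw [mul_assoc, mul_assoc, hf.out]
  rw [← mul_assoc]
  exact hx

theorem mul_mem' {x y : Λ} (hx : f * x * f = x) (hy : f * y * f = y) :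
    f * (x * y) * f = x * y := by
  rw [← mul_assoc f x y, absorb_left hx, mul_assoc, absorb_right hy]

instance : Ring (Corner f) :=
  { (inferInstance : AddCommGroup (Corner f)) with
    mul := fun x y => ⟨x.1 * y.1, mul_mem' x.2 y.2⟩
    one := ⟨f, by show f * f * f = f; rw [hf.out, hf.out]⟩
    mul_assoc := fun a b c => Subtype.ext (mul_assoc a.1 b.1 c.1)
    one_mul := fun a => Subtype.ext (absorb_left a.2)
    mul_one := fun a => Subtype.ext (absorb_right a.2)
    left_distrib := fun a b c => Subtype.ext (mul_add a.1 b.1 c.1)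
    right_distrib := fun a b c => Subtype.ext (add_mul a.1 b.1 c.1)
    zero_mul := fun a => Subtype.ext (zero_mul a.1)
    mul_zero := fun a => Subtype.ext (mul_zero a.1) }

@[simp] theorem mul_val (x y : Corner f) : (x * y).1 = x.1 * y.1 := rfl
@[simp] theorem one_val : (1 : Corner f).1 = f := rfl

end Corner

/-- For a left `Λ`-module `M`, the subgroup `fM = {m | f • m = m}`. -/
def cornerSubAddSubgroup (f : Λ) (M : Type u) [AddCommGroup M] [Module Λ M] :
    AddSubgroup M where
  carrier := {m | f • m = m}
  add_mem' := by
    intro a b ha hb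
    simp only [Set.mem_setOf_eq] at *
    rw [smul_add, ha, hb]
  zero_mem' := by simp
  neg_mem' := by
    intro a ha
    simp only [Set.mem_setOf_eq] at *
    rw [smul_neg, ha]

/-- `fM`, the image of a left `Λ`-module `M` under the idempotent `f`;
this is the concrete incarnation of `fΛ ⊗_Λ M`. -/
def CornerSub (f : Λ) (M : Type u) [AddCommGroup M] [Module Λ M] : Type u :=
  ↥(cornerSubAddSubgroup f M)

namespace CornerSub

variable {f : Λ} [hf : Fact (IsIdempotentElem f)]
variable {M : Type u} [AddCommGroup M] [Module Λ M]

instance : AddCommGroup (CornerSub f M) :=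
  inferInstanceAs (AddCommGroup ↥(cornerSubAddSubgroup f M))

instance : SMul (Corner f) (CornerSub f M) :=
  ⟨fun a m => ⟨a.1 • m.1, by
    show f • a.1 • m.1 = a.1 • m.1
    rw [smul_smul, Corner.absorb_left a.2]⟩⟩

@[simp] theorem smul_val (a : Corner f) (m : CornerSub f M) :
    (a • m).1 = a.1 • m.1 := rfl

instance : Module (Corner f) (CornerSub f M) where
  one_smul m := Subtype.ext m.2
  mul_smul a b m := Subtype.ext (mul_smul a.1 b.1 m.1)
  smul_add a m n := Subtype.ext (smul_add a.1 m.1 n.1)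
  add_smul a b m := Subtype.ext (add_smul a.1 b.1 m.1)
  zero_smul m := Subtype.ext (zero_smul Λ m.1)
  smul_zero a := Subtype.ext (smul_zero a.1)

end CornerSub

/-- The functorial action of `M ↦ fM` on a `Λ`-linear map. -/
def cornerMap (f : Λ) [hf : Fact (IsIdempotentElem f)]
    {M N : Type u} [AddCommGroup M] [Module Λ M] [AddCommGroup N] [Module Λ N]
    (g : M →ₗ[Λ] N) : CornerSub f M →ₗ[Corner f] CornerSub f N where
  toFun m := ⟨g m.1, by show f • g m.1 = g m.1; rw [← map_smul, m.2]⟩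
  map_add' m n := Subtype.ext (map_add g m.1 n.1)
  map_smul' a m := Subtype.ext (map_smul g a.1 m.1)

/-- The left ideal `Λe`. -/
def lambdaE (e : Λ) : Submodule Λ Λ :=
  LinearMap.range (LinearMap.toSpanSingleton Λ Λ e)

/-- The Jacobson radical of a ring. -/
def jacRad (Λ : Type u) [Ring Λ] : Ideal Λ := Ideal.jacobson (⊥ : Ideal Λ)

end CornerLib

section ProofAux

variable {Λ : Type u} [Ring Λ] (e : Λ) [he : Fact (IsIdempotentElem e)]

private abbrev Rr (e : Λ) [Fact (IsIdempotentElem e)] := Corner (1 - e)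
private abbrev Pp (e : Λ) [Fact (IsIdempotentElem e)] := CornerSub (1 - e) Λ
private abbrev Qq (e : Λ) [Fact (IsIdempotentElem e)] := CornerSub (1 - e) ↥(lambdaE e)

private theorem memP {x : Λ} (hx : (1 - e) • x = x) : (1 - e) * x = x := hx

/-- Inclusion `fΛf → fΛ`. -/
private def i₁ : Rr e →ₗ[Rr e] Pp e where
  toFun r := ⟨r.1, show (1 - e) • r.1 = r.1 from Corner.absorb_left r.2⟩
  map_add' a b := rfl
  map_smul' a b := rfl

/-- Projection `fΛ → fΛf`, `x ↦ x f`. -/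
private def p₁ : Pp e →ₗ[Rr e] Rr e where
  toFun x := ⟨x.1 * (1 - e), by
    show (1 - e) * (x.1 * (1 - e)) * (1 - e) = x.1 * (1 - e)
    rw [← mul_assoc, memP e x.2, mul_assoc, (Fact.out : IsIdempotentElem (1 - e))]⟩
  map_add' a b := Subtype.ext (add_mul a.1 b.1 (1 - e))
  map_smul' a x := Subtype.ext (mul_assoc a.1 x.1 (1 - e))

/-- Inclusion `fΛe → fΛ`. -/
private def i₂ : Qq e →ₗ[Rr e] Pp e where
  toFun m := ⟨m.1.1, congrArg Subtype.val m.2⟩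
  map_add' a b := rfl
  map_smul' a b := rfl

/-- Projection `fΛ → fΛe`, `x ↦ x e`. -/
private def p₂ : Pp e →ₗ[Rr e] Qq e where
  toFun x := ⟨⟨x.1 * e, ⟨x.1, rfl⟩⟩, by
    apply Subtype.ext
    show (1 - e) * (x.1 * e) = x.1 * e
    rw [← mul_assoc, memP e x.2]⟩
  map_add' a b := Subtype.ext (Subtype.ext (add_mul a.1 b.1 e))
  map_smul' a x := Subtype.ext (Subtype.ext (mul_assoc a.1 x.1 e))

private theorem p₂_i₂ : (p₂ e).comp (i₂ e) = LinearMap.id := by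
  ext m
  apply Subtype.ext; apply Subtype.ext
  obtain ⟨r, hr⟩ := m.1.2
  show m.1.1 * e = m.1.1
  have : r • e = m.1.1 := hr
  rw [← this]
  show r * e * e = r * e
  rw [mul_assoc, he.out]

private theorem split_P :
    ((i₁ e).coprod (i₂ e)).comp ((p₁ e).prod (p₂ e)) = LinearMap.id := by
  ext x
  apply Subtype.ext
  show x.1 * (1 - e) + x.1 * e = x.1
  rw [mul_sub, mul_one, sub_add_cancel]

private theorem projective_P_iff_Q :
    Module.Projective (Rr e) (Pp e) ↔ Module.Projective (Rr e) (Qq e) := by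
  constructor
  · intro hP
    exact Module.Projective.of_split (i₂ e) (p₂ e) (p₂_i₂ e)
  · intro hQ
    exact Module.Projective.of_split ((p₁ e).prod (p₂ e)) ((i₁ e).coprod (i₂ e)) (split_P e)

end ProofAux

theorem corner_hom_functor_exact_iff_projective
    {Λ : Type u} [Ring Λ] (e : Λ) [he : Fact (IsIdempotentElem e)] :
    (∀ (Y Z W : ModuleCat.{u} (Corner (1 - e)))
        (g : (Y : Type u) →ₗ[Corner (1 - e)] (Z : Type u))
        (h : (Z : Type u) →ₗ[Corner (1 - e)] (W : Type u)),
        LinearMap.range g = LinearMap.ker h →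
        ∀ ψ : CornerSub (1 - e) Λ →ₗ[Corner (1 - e)] (Z : Type u),
          h.comp ψ = 0 ↔ ∃ φ : CornerSub (1 - e) Λ →ₗ[Corner (1 - e)] (Y : Type u),
            g.comp φ = ψ) ↔
      Module.Projective (Corner (1 - e)) (CornerSub (1 - e) ↥(lambdaE e)) := by
  rw [← projective_P_iff_Q e]
  constructor
  · intro hcond
    rw [Module.projective_def']
    have := hcond (ModuleCat.of (Rr e) ((Pp e) →₀ (Rr e))) (ModuleCat.of (Rr e) (Pp e))
      (ModuleCat.of (Rr e) PUnit)
      (Finsupp.linearCombination (Rr e) id) 0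
      (by rw [LinearMap.ker_zero, LinearMap.range_eq_top]
          exact Finsupp.linearCombination_id_surjective _ _)
      LinearMap.id
    obtain ⟨φ, hφ⟩ := this.mp (LinearMap.zero_comp _)
    exact ⟨φ, hφ⟩
  · intro hP Y Z W g h hexact ψ
    constructor
    · intro hψ
      obtain ⟨φ, hφ⟩ := Module.projective_lifting_property g.rangeRestrict
        (ψ.codRestrict (LinearMap.range g) (fun x => by
          rw [hexact, LinearMap.mem_ker]
          exact LinearMap.congr_fun hψ x))
        g.surjective_rangeRestrict
      exact ⟨φ, LinearMap.ext fun x => congrArg Subtype.val (LinearMap.congr_fun hφ x)⟩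
    · rintro ⟨φ, rfl⟩
      ext x
      have : g (φ x) ∈ LinearMap.ker h := hexact ▸ LinearMap.mem_range_self g (φ x)
      exact this
end
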